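/- For every real x, the function F(x) = ∫_{−∞}^{x/2} ∫_{t_2}^{x−t_2} e^{−e^{−t_2}} e^{−t_2} e^{−t_1} dt_1 dt_2 is differentiable and its derivative equals ρ(x) = −e^{−x} · ∫_{−∞}^{−e^{−x/2}} (e^t/t) dt = −e^{−x}·Ei(−e^{−x/2}), where Ei(y) = ∫_{−∞}^{y} (e^t/t) dt is the exponential integral. -/

import Mathlib

open MeasureTheory Filter Real Topology

noncomputable section

/-- The Bernoulli measure on `Bool` with parameter `p` (clamped into `[0,1]`;
for `p ∈ [0,1]` this is the usual Bernoulli(`p`) distribution). -/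
def bernoulliMeasure (p : ℝ) : Measure Bool :=
  (PMF.bernoulli (min 1 (Real.toNNReal p)) (min_le_left _ _)).toMeasure

/-- The binomial random graph `G(n,p)`: a sample point assigns a Boolean (edge/non-edge)
to each unordered pair of vertices, independently with probability `p` each. -/
def gnp (n : ℕ) (p : ℝ) : Measure (Sym2 (Fin n) → Bool) :=
  Measure.pi fun _ => bernoulliMeasure p

instance (p : ℝ) : IsProbabilityMeasure (bernoulliMeasure p) := by
  unfold bernoulliMeasure; infer_instance

instance (n : ℕ) (p : ℝ) : IsProbabilityMeasure (gnp n p) := by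
  unfold gnp; infer_instance

/-- Adjacency of two vertices in a sample of `G(n,p)`. -/
def Adj {n : ℕ} (ω : Sym2 (Fin n) → Bool) (u v : Fin n) : Prop :=
  u ≠ v ∧ ω s(u, v) = true

/-- `cdeg ω U` : the number of common neighbours of the vertex set `U`. -/
def cdeg {n : ℕ} (ω : Sym2 (Fin n) → Bool) (U : Finset (Fin n)) : ℕ :=
  Nat.card {w : Fin n // ∀ u ∈ U, Adj ω w u}

/-- The maximum number of common neighbours of a `k`-element vertex set. -/
def maxCdeg (n k : ℕ) (ω : Sym2 (Fin n) → Bool) : ℕ :=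
  (Finset.powersetCard k (Finset.univ : Finset (Fin n))).sup (cdeg ω)

/-- The `j`-th largest (counted with multiplicity, `j ≥ 1`) number of common neighbours
of a `k`-element vertex set. -/
def jthMaxCdeg (n k j : ℕ) (ω : Sym2 (Fin n) → Bool) : ℕ :=
  (((Finset.powersetCard k (Finset.univ : Finset (Fin n))).val.map
      (cdeg ω)).sort (· ≤ ·)).reverse.getD (j - 1) 0

/-- The scaling constant `a_{n,k}`. -/
def ank (p : ℝ) (n k : ℕ) : ℝ :=
  n * p ^ k + Real.sqrt (2 * k * p ^ k * (1 - p ^ k) * n * Real.log n) *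
    (1 - Real.log (Nat.factorial k) / (2 * k * Real.log n)
       - Real.log (4 * Real.pi * k * Real.log n) / (4 * k * Real.log n))

/-- The scaling constant `b_{n,k}`. -/
def bnk (p : ℝ) (n k : ℕ) : ℝ :=
  Real.sqrt (p ^ k * (1 - p ^ k) * n / (2 * k * Real.log n))

/-- The density `p_i(x_1,…,x_m) = e^{-x_1}⋯e^{-x_m} e^{-e^{-x_m}} 𝟙(x_1 ≥ … ≥ x_m)`. -/
def gumbelVecDensity (m : ℕ) (x : Fin m → ℝ) : ℝ :=
  if h : 0 < m then
    (∏ j, Real.exp (-(x j))) *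
      Real.exp (-Real.exp (-(x ⟨m - 1, Nat.sub_lt h one_pos⟩))) *
      (if ∀ j l : Fin m, j ≤ l → x l ≤ x j then 1 else 0)
  else 0

end

/-- The exponential integral $\mathrm{Ei}(y)=\int_{-\infty}^y e^t/t\,dt$. -/
noncomputable def Ei (y : ℝ) : ℝ := ∫ t in Set.Iic y, Real.exp t / t

/-- The cdf $F(x)=\int_{-\infty}^{x/2}\int_{t_2}^{x-t_2}
e^{-e^{-t_2}}e^{-t_2}e^{-t_1}\,dt_1\,dt_2$. -/
noncomputable def limitCdfPath (x : ℝ) : ℝ :=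
  ∫ t2 in Set.Iic (x / 2),
    Real.exp (-Real.exp (-t2)) * Real.exp (-t2) * (∫ t1 in t2..(x - t2), Real.exp (-t1))

/-!
Evaluating the inner integral gives `F x = A (x / 2) - exp (-x) * G (x / 2)` with
`A c = ∫_{-∞}^c e^{-e^{-t}} e^{-2t} dt` and `G c = ∫_{-∞}^c e^{-e^{-t}} dt`; both integrands are
`O(e^t)` at `-∞`. On differentiating, the two boundary terms `e^{-e^{-x/2}} e^{-x} / 2` cancel, so
`F' x = exp (-x) * G (x / 2)`, and the substitution `s = -e^{-t}` turns `G c` into `-Ei (-e^{-c})`.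
-/

open Set
open scoped Nat

theorem hasDerivAt_integral_Iic {f : ℝ → ℝ} {b c : ℝ} (hf : IntegrableOn f (Iic b))
    (hcb : c < b) (hfc : ContinuousAt f c) :
    HasDerivAt (fun x => ∫ t in Iic x, f t) (f c) c := by
  have hnhds : Iic b ∈ 𝓝 c := Iic_mem_nhds hcb
  have hint : ∀ y ≤ b, IntegrableOn f (Iic y) := fun y hy => hf.mono_set (Iic_subset_Iic.2 hy)
  have hderiv : HasDerivAt (fun x => (∫ t in Iic (c - 1), f t) + ∫ t in (c - 1)..x, f t)
      (f c) c :=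
    (intervalIntegral.integral_hasDerivAt_right
      ((intervalIntegrable_iff_integrableOn_Ioc_of_le (by linarith)).2
        ((hint c hcb.le).mono_set Ioc_subset_Iic_self))
      ⟨Iic b, hnhds, hf.aestronglyMeasurable⟩ hfc).const_add _
  refine hderiv.congr_of_eventuallyEq ?_
  filter_upwards [hnhds] with y hy
  rw [← intervalIntegral.integral_Iic_sub_Iic (hint _ (by linarith)) (hint y hy)]
  ring

theorem pow_mul_exp_neg_le_factorial {u : ℝ} (hu : 0 ≤ u) (n : ℕ) :
    u ^ n * exp (-u) ≤ n ! := by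
  have := pow_div_factorial_le_exp u hu n
  rw [div_le_iff₀ (by positivity)] at this
  calc u ^ n * exp (-u) ≤ exp u * (n ! : ℝ) * exp (-u) := by gcongr
    _ = n ! := by rw [mul_comm, ← mul_assoc, ← exp_add]; simp

theorem exp_neg_exp_neg_mul_pow_le (t : ℝ) (n : ℕ) :
    exp (-exp (-t)) * exp (-t) ^ n ≤ (n + 1)! * exp t := by
  have hinv : exp (-t) * exp t = 1 := by rw [← exp_add]; simp
  have hfactor : exp (-exp (-t)) * exp (-t) ^ n = exp (-t) ^ (n + 1) * exp (-exp (-t)) * exp t := by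
    linear_combination (-(exp (-exp (-t)) * exp (-t) ^ n)) * hinv
  rw [hfactor]
  gcongr
  exact_mod_cast pow_mul_exp_neg_le_factorial (exp_pos _).le (n + 1)

theorem integrableOn_exp_neg_exp_neg_mul_pow_Iic (n : ℕ) (c : ℝ) :
    IntegrableOn (fun t => exp (-exp (-t)) * exp (-t) ^ n) (Iic c) := by
  refine ((integrableOn_exp_Iic c).const_mul ((n + 1)! : ℝ)).mono'
    (by fun_prop : Continuous _).aestronglyMeasurable.restrict (ae_of_all _ fun t => ?_)
  rw [norm_of_nonneg (by positivity)]
  exact exp_neg_exp_neg_mul_pow_le t n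

theorem hasDerivAt_integral_exp_neg_exp_neg_mul_pow_Iic (n : ℕ) (c : ℝ) :
    HasDerivAt (fun x => ∫ t in Iic x, exp (-exp (-t)) * exp (-t) ^ n)
      (exp (-exp (-c)) * exp (-c) ^ n) c :=
  hasDerivAt_integral_Iic (integrableOn_exp_neg_exp_neg_mul_pow_Iic n (c + 1)) (lt_add_one c)
    (by fun_prop)

theorem image_neg_exp_neg_Iic (c : ℝ) : (fun t => -exp (-t)) '' Iic c = Iic (-exp (-c)) := by
  have : (fun t => -exp (-t)) = Neg.neg ∘ exp ∘ Neg.neg := rfl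
  rw [this, image_comp, image_comp, image_neg_Iic, image_exp_Ici, image_neg_Ici]

theorem integral_exp_neg_exp_neg_Iic (c : ℝ) :
    ∫ t in Iic c, exp (-exp (-t)) = -Ei (-exp (-c)) := by
  have hderiv : ∀ t ∈ Iic c, HasDerivWithinAt (fun t => -exp (-t)) (exp (-t)) (Iic c) t :=
    fun t _ => by simpa using ((hasDerivAt_neg t).exp.fun_neg).hasDerivWithinAt
  have hinj : InjOn (fun t => -exp (-t)) (Iic c) := fun s _ t _ h => by simpa using h
  rw [Ei, ← image_neg_exp_neg_Iic, integral_image_eq_integral_abs_deriv_smul measurableSet_Iic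
    hderiv hinj, ← integral_neg]
  refine setIntegral_congr_fun measurableSet_Iic fun t _ => ?_
  have hne : exp (-t) ≠ 0 := (exp_pos _).ne'
  simp only [abs_of_pos (exp_pos _), smul_eq_mul]
  field_simp

theorem limitCdfPath_eq (x : ℝ) :
    limitCdfPath x = (∫ t in Iic (x / 2), exp (-exp (-t)) * exp (-t) ^ 2)
      - exp (-x) * ∫ t in Iic (x / 2), exp (-exp (-t)) := by
  have hG : IntegrableOn (fun t => exp (-exp (-t))) (Iic (x / 2)) := by
    simpa using integrableOn_exp_neg_exp_neg_mul_pow_Iic 0 (x / 2)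
  rw [limitCdfPath, ← integral_const_mul, ← integral_sub
    (integrableOn_exp_neg_exp_neg_mul_pow_Iic 2 _) (hG.const_mul _)]
  refine setIntegral_congr_fun measurableSet_Iic fun t _ => ?_
  have hsplit : exp (-t) * exp (-(x - t)) = exp (-x) := by rw [← exp_add]; ring_nf
  simp only [intervalIntegral.integral_comp_neg, integral_exp]
  linear_combination (-exp (-exp (-t))) * hsplit

/-- **The limit cdf of the path/bijective-2-clique extension has density
$\rho(x)=-e^{-x}\mathrm{Ei}(-e^{-x/2})$.** -/
theorem limitCdfPath_hasDerivAt (x : ℝ) :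
    HasDerivAt limitCdfPath (-(Real.exp (-x)) * Ei (-Real.exp (-x / 2))) x := by
  have hhalf : HasDerivAt (· / 2) (1 / 2 : ℝ) x := (hasDerivAt_id x).div_const 2
  have hA := (hasDerivAt_integral_exp_neg_exp_neg_mul_pow_Iic 2 (x / 2)).comp x hhalf
  have hG := (hasDerivAt_integral_exp_neg_exp_neg_mul_pow_Iic 0 (x / 2)).comp x hhalf
  simp only [pow_zero, mul_one] at hG
  rw [funext limitCdfPath_eq]
  refine (hA.sub ((hasDerivAt_neg x).exp.mul hG)).congr_deriv ?_
  have hsq : exp (-(x / 2)) ^ 2 = exp (-x) := by rw [← exp_nat_mul]; ring_nf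
  rw [neg_div, ← neg_neg (Ei _), ← integral_exp_neg_exp_neg_Iic, hsq]
  simp only [Function.comp_apply]
  ring
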